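/- Let 0 < α ≤ 1, let z be a real number with z > 1, regarded as a complex number, and let ω = exp(2πi/3) ∈ ℂ. Then ∑_{n=0}^{∞} Γ(3n+2+α)/(Γ(α)·Γ(3n+3))·z^{−n} = (z^{2/3}/3)·((1−z^{−1/3})^{−α} + ω·(1−ω·z^{−1/3})^{−α} + ω²·(1−ω²·z^{−1/3})^{−α}), where z^{2/3} and z^{−1/3} are real powers of z and the complex powers (·)^{−α} are principal-branch complex powers; in particular the right-hand side is real. -/

import Mathlib

/-!
`φ̃_α(n) = Γ(n+α)/(Γ(α) Γ(n+1))` is the binomial coefficient `(α+n-1 choose n)`, so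
`∑ φ̃_α(n) xⁿ = (1 - x)^(-α)` for `‖x‖ < 1`. Evaluating this at `x = ωʲ t`, `t = z^(-1/3)`, and
averaging with the weights `ω^(-2j)` keeps exactly the terms with `n ≡ 2 mod 3`
(roots-of-unity filter); finally `z^(2/3) t^(3m+2) = z^(-m)`.
-/

open Finset

section RootsOfUnityFilter

variable {K : Type*} [Field K] {ζ : K} {k : ℕ}

theorem IsPrimitiveRoot.geom_sum_zpow (hζ : IsPrimitiveRoot ζ k) (m : ℤ) :
    ∑ j ∈ range k, (ζ ^ m) ^ j = if (k : ℤ) ∣ m then (k : K) else 0 := by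
  split_ifs with hm
  · simp [(hζ.zpow_eq_one_iff_dvd m).mpr hm]
  · have hne : ζ ^ m ≠ 1 := fun h => hm ((hζ.zpow_eq_one_iff_dvd m).mp h)
    rw [geom_sum_eq hne, ← zpow_natCast, ← zpow_mul, mul_comm, zpow_mul, zpow_natCast,
      hζ.pow_eq_one, one_zpow, sub_self, zero_div]

variable [TopologicalSpace K] [IsTopologicalRing K]

theorem IsPrimitiveRoot.hasSum_mul_add_of_hasSum {r : ℕ} (hζ : IsPrimitiveRoot ζ k) (hr : r < k)
    {a F : ℕ → K} (hF : ∀ j < k, HasSum (fun n => a n * ζ ^ (j * n)) (F j)) :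
    HasSum (fun m => k * a (k * m + r)) (∑ j ∈ range k, ζ⁻¹ ^ (j * r) * F j) := by
  have hζ0 : ζ ≠ 0 := hζ.ne_zero (by omega)
  have hsum : HasSum (fun n => ∑ j ∈ range k, ζ⁻¹ ^ (j * r) * (a n * ζ ^ (j * n)))
      (∑ j ∈ range k, ζ⁻¹ ^ (j * r) * F j) :=
    hasSum_sum fun j hj => (hF j (mem_range.mp hj)).mul_left _
  have hterm : ∀ n, ∑ j ∈ range k, ζ⁻¹ ^ (j * r) * (a n * ζ ^ (j * n))
      = a n * if (k : ℤ) ∣ (n - r : ℤ) then (k : K) else 0 := by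
    intro n
    rw [← hζ.geom_sum_zpow, mul_sum]
    refine sum_congr rfl fun j _ => ?_
    rw [zpow_sub₀ hζ0, zpow_natCast, zpow_natCast, div_pow, ← pow_mul, ← pow_mul, inv_pow,
      div_eq_mul_inv, mul_comm n j, mul_comm r j]
    ring
  have hsupp : ∀ n ∉ Set.range (fun m => k * m + r),
      a n * (if (k : ℤ) ∣ (n - r : ℤ) then (k : K) else 0) = 0 := by
    intro n hn
    rw [if_neg, mul_zero]
    rintro ⟨c, hc⟩
    have hc0 : 0 ≤ c := by nlinarith
    lift c to ℕ using hc0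
    exact hn ⟨c, by zify; linarith⟩
  have hinj : Function.Injective (fun m => k * m + r) := fun m₁ m₂ h => by
    simpa [show k ≠ 0 by omega] using h
  refine ((hinj.hasSum_iff hsupp).mpr (hsum.congr_fun fun n => (hterm n).symm)).congr_fun
    fun m => ?_
  simp [mul_comm]

theorem IsPrimitiveRoot.hasSum_three_mul_add_two_of_hasSum (hζ : IsPrimitiveRoot ζ 3)
    {a F : ℕ → K} (hF : ∀ j < 3, HasSum (fun n => a n * ζ ^ (j * n)) (F j)) :
    HasSum (fun m => 3 * a (3 * m + 2)) (F 0 + ζ * F 1 + ζ ^ 2 * F 2) := by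
  have hζ_inv : ζ⁻¹ ^ 2 = ζ := by
    rw [inv_pow, inv_eq_of_mul_eq_one_right (by rw [← pow_succ, hζ.pow_eq_one])]
  simpa [sum_range_succ, pow_mul', hζ_inv] using
    hζ.hasSum_mul_add_of_hasSum (by norm_num : 2 < 3) hF

end RootsOfUnityFilter

theorem Complex.ofReal_Gamma_div_eq_choose {a : ℝ} (ha : ∀ k : ℕ, a ≠ -k) (n : ℕ) :
    ((Real.Gamma (n + a) / (Real.Gamma a * Real.Gamma (n + 1)) : ℝ) : ℂ)
      = Ring.choose ((a : ℂ) + n - 1) n := by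
  have ha' : ∀ k : ℕ, (a : ℂ) ≠ -k := fun k h => ha k (by exact_mod_cast h)
  have hpoch := Ring.factorial_nsmul_multichoose_eq_ascPochhammer (a : ℂ) n
  rw [Polynomial.ascPochhammer_smeval_eq_eval, ← Complex.Gamma_add_nat_div_Gamma_eq _ ha',
    nsmul_eq_mul, Ring.multichoose_eq] at hpoch
  have hfac : (n.factorial : ℂ) ≠ 0 := Nat.cast_ne_zero.mpr n.factorial_ne_zero
  rw [eq_comm, ← mul_right_inj' hfac, hpoch, Real.Gamma_nat_eq_factorial]
  push_cast
  rw [← Complex.Gamma_ofReal, ← Complex.Gamma_ofReal, add_comm]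
  push_cast
  field_simp

theorem Complex.hasSum_choose_mul_pow (a : ℂ) {x : ℂ} (hx : ‖x‖ < 1) :
    HasSum (fun n : ℕ => Ring.choose (a + n - 1) n * x ^ n) ((1 - x) ^ (-a)) := by
  have h := (Complex.one_div_one_sub_cpow_hasFPowerSeriesOnBall_zero a).hasSum
    (y := x) (by simpa [← ofReal_norm] using hx)
  simpa [FormalMultilinearSeries.ofScalars_apply_eq, Complex.cpow_neg, mul_comm] using h

theorem Complex.hasSum_choose_mul_pow_mul_pow (a : ℂ) {x ζ : ℂ} (hx : ‖x‖ < 1) (hζ : ‖ζ‖ = 1)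
    (j : ℕ) :
    HasSum (fun n : ℕ => Ring.choose (a + n - 1) n * x ^ n * ζ ^ (j * n))
      ((1 - ζ ^ j * x) ^ (-a)) := by
  have hζx : ‖ζ ^ j * x‖ < 1 := by simpa [hζ] using hx
  refine (Complex.hasSum_choose_mul_pow a hζx).congr_fun fun n => ?_
  rw [mul_pow, ← pow_mul]
  ring

theorem ztransform_phi_mod3_2_general (α : ℝ) (hα : 0 < α) (z : ℝ) (hz : 1 < z)
    (ω : ℂ) (hω : ω = Complex.exp (2 * (Real.pi : ℂ) * Complex.I / 3)) :
    HasSum (fun n : ℕ =>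
        ((Real.Gamma (3 * (n : ℝ) + 2 + α) /
            (Real.Gamma α * Real.Gamma (3 * (n : ℝ) + 3)) * z ^ (-(n : ℝ)) : ℝ) : ℂ))
      ((((z ^ ((2 / 3 : ℝ)) : ℝ) : ℂ) / 3) *
        ((1 - ((z ^ (-(1 / 3 : ℝ)) : ℝ) : ℂ)) ^ ((-α : ℝ) : ℂ)
          + ω * (1 - ω * ((z ^ (-(1 / 3 : ℝ)) : ℝ) : ℂ)) ^ ((-α : ℝ) : ℂ)
          + ω ^ 2 * (1 - ω ^ 2 * ((z ^ (-(1 / 3 : ℝ)) : ℝ) : ℂ)) ^ ((-α : ℝ) : ℂ))) := by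
  have hz0 : 0 < z := zero_lt_one.trans hz
  set t : ℝ := z ^ (-(1 / 3 : ℝ))
  have ht0 : 0 < t := Real.rpow_pos_of_pos hz0 _
  have ht1 : t < 1 := Real.rpow_lt_one_of_one_lt_of_neg hz (by norm_num)
  have hω3 : IsPrimitiveRoot ω 3 := by
    simpa [hω] using Complex.isPrimitiveRoot_exp 3 (by norm_num)
  have hseries : ∀ j < 3, HasSum (fun n : ℕ => Ring.choose ((α : ℂ) + n - 1) n * (t : ℂ) ^ n
      * ω ^ (j * n)) ((1 - ω ^ j * t) ^ ((-α : ℝ) : ℂ)) := fun j _ => by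
    rw [Complex.ofReal_neg]
    exact Complex.hasSum_choose_mul_pow_mul_pow _ (by simpa [abs_of_pos ht0] using ht1)
      (hω3.norm'_eq_one (by norm_num)) j
  have hfilter := (hω3.hasSum_three_mul_add_two_of_hasSum hseries).mul_left
    (((z ^ (2 / 3 : ℝ) : ℝ) : ℂ) / 3)
  simp only [pow_zero, one_mul, pow_one] at hfilter
  refine hfilter.congr_fun fun m => ?_
  have hpow : z ^ (2 / 3 : ℝ) * t ^ (3 * m + 2) = z ^ (-(m : ℝ)) := by
    rw [← Real.rpow_natCast, ← Real.rpow_mul hz0.le, ← Real.rpow_add hz0]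
    push_cast
    ring_nf
  have hα_ne : ∀ k : ℕ, α ≠ -k := fun k h => by linarith [(k.cast_nonneg : (0 : ℝ) ≤ k)]
  have hcoeff := Complex.ofReal_Gamma_div_eq_choose hα_ne (3 * m + 2)
  push_cast at hcoeff
  rw [show (3 * (m : ℝ) + 2 + 1) = 3 * m + 3 by ring] at hcoeff
  rw [← hpow]
  push_cast
  rw [hcoeff]
  ring

/-- Z-transform of the subsequence `n ↦ φ̃_α(3n+2)` for `0 < α ≤ 1`, `z > 1`,
with `ω = exp(2πi/3)`:
`∑ₙ Γ(3n+2+α)/(Γ(α)·Γ(3n+3))·z^(-n)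
  = (z^(2/3)/3)·((1-z^(-1/3))^(-α) + ω·(1-ω·z^(-1/3))^(-α) + ω²·(1-ω²·z^(-1/3))^(-α))`,
the sum of real terms being taken in `ℂ`, so in particular the RHS is real. -/
theorem ztransform_phi_mod3_2 (α : ℝ) (hα : 0 < α) (hα' : α ≤ 1) (z : ℝ) (hz : 1 < z)
    (ω : ℂ) (hω : ω = Complex.exp (2 * (Real.pi : ℂ) * Complex.I / 3)) :
    HasSum (fun n : ℕ =>
        ((Real.Gamma (3 * (n : ℝ) + 2 + α) /
            (Real.Gamma α * Real.Gamma (3 * (n : ℝ) + 3)) * z ^ (-(n : ℝ)) : ℝ) : ℂ))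
      ((((z ^ ((2 / 3 : ℝ)) : ℝ) : ℂ) / 3) *
        ((1 - ((z ^ (-(1 / 3 : ℝ)) : ℝ) : ℂ)) ^ ((-α : ℝ) : ℂ)
          + ω * (1 - ω * ((z ^ (-(1 / 3 : ℝ)) : ℝ) : ℂ)) ^ ((-α : ℝ) : ℂ)
          + ω ^ 2 * (1 - ω ^ 2 * ((z ^ (-(1 / 3 : ℝ)) : ℝ) : ℂ)) ^ ((-α : ℝ) : ℂ))) :=
  ztransform_phi_mod3_2_general α hα z hz ω hω
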